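/- arXiv:2212.03050 — 2 statements merged into one kernel-verified Lean document; each statement's English description precedes it below -/
import Mathlib

section
/- For F : 𝒫₂(ℝ^d) → ℝ with continuous linear functional derivative, define f^n : (ℝ^d)^n → ℝ by f^n(x^1,…,x^n) = n F((1/n)Σ_{j=1}^n δ_{x^j}). Then for each i = 1,…,n, the gradient of f^n in the i-th variable equals the intrinsic derivative of F evaluated at the empirical measure: ∇_i f^n(x^1,…,x^n) = D_m F((1/n)Σ_{j=1}^n δ_{x^j}, x^i), where D_m F(m,x) = ∇_x (δF/δm)(m,x). -/
open MeasureTheory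
open scoped ENNReal RealInnerProductSpace

/-- Squared 2-Wasserstein distance on `ℝ^d`, via couplings. -/
noncomputable def W2sq {E : Type*} [NormedAddCommGroup E] [MeasurableSpace E]
    (μ ν : Measure E) : ℝ :=
  sInf {r | ∃ π : Measure (E × E), IsProbabilityMeasure π ∧
    π.map Prod.fst = μ ∧ π.map Prod.snd = ν ∧ r = ∫ p, ‖p.1 - p.2‖ ^ 2 ∂π}

/-- The empirical measure of a configuration of `n` points. -/
noncomputable def empMeas {E : Type*} [MeasurableSpace E] {n : ℕ}
    (x : Fin n → E) : Measure E :=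
  (n : ℝ≥0∞)⁻¹ • ∑ j : Fin n, Measure.dirac (x j)

section Aux
variable {α : Type*} [MeasurableSpace α] [MeasurableSingletonClass α]

lemma integrable_dirac0 {g : α → ℝ} (hg : StronglyMeasurable g) (a : α) :
    Integrable g (Measure.dirac a) := by
  refine (integrable_const (g a)).congr ?_
  rw [MeasureTheory.ae_dirac_eq]
  exact Filter.eventually_pure.2 rfl

lemma integrable_wdirac {ι : Type*} (s : Finset ι) (w : ι → ℝ≥0∞) (a : ι → α)
    (hw : ∀ i ∈ s, w i ≠ ⊤) {g : α → ℝ} (hg : StronglyMeasurable g) :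
    Integrable g (∑ i ∈ s, w i • Measure.dirac (a i)) := by
  rw [integrable_finset_sum_measure]
  exact fun i hi => (integrable_dirac0 hg (a i)).smul_measure (hw i hi)

lemma integral_wdirac {ι : Type*} (s : Finset ι) (w : ι → ℝ≥0∞) (a : ι → α)
    (hw : ∀ i ∈ s, w i ≠ ⊤) {g : α → ℝ} (hg : StronglyMeasurable g) :
    ∫ p, g p ∂(∑ i ∈ s, w i • Measure.dirac (a i))
      = ∑ i ∈ s, (w i).toReal * g (a i) := by
  rw [integral_finset_sum_measure
    (fun i hi => (integrable_dirac0 hg (a i)).smul_measure (hw i hi))]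
  refine Finset.sum_congr rfl fun i hi => ?_
  rw [integral_smul_measure, integral_dirac' g (a i) hg, smul_eq_mul]

omit [MeasurableSingletonClass α] in
lemma map_wdirac {β : Type*} [MeasurableSpace β] {f : α → β} (hf : Measurable f)
    {ι : Type*} (s : Finset ι) (w : ι → ℝ≥0∞) (a : ι → α) :
    (∑ i ∈ s, w i • Measure.dirac (a i)).map f
      = ∑ i ∈ s, w i • Measure.dirac (f (a i)) := by
  classical
  induction s using Finset.induction_on with
  | empty => simp
  | insert _ _ h ih =>
    rw [Finset.sum_insert h, Finset.sum_insert h, Measure.map_add _ _ hf,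
      Measure.map_smul, Measure.map_dirac' hf, ih]

end Aux

lemma W2sq_le_of_coupling {E : Type*} [NormedAddCommGroup E] [MeasurableSpace E]
    {μ ν : Measure E} (π : Measure (E × E)) (hπ : IsProbabilityMeasure π)
    (h1 : π.map Prod.fst = μ) (h2 : π.map Prod.snd = ν) :
    W2sq μ ν ≤ ∫ p, ‖p.1 - p.2‖ ^ 2 ∂π := by
  refine csInf_le ⟨0, fun r hr => ?_⟩ ⟨π, hπ, h1, h2, rfl⟩
  obtain ⟨π', -, -, -, rfl⟩ := hr
  exact integral_nonneg fun p => by positivity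

lemma cont_inner_grad {E : Type*} [NormedAddCommGroup E] [InnerProductSpace ℝ E]
    [CompleteSpace E] (g : E → ℝ) (hg : ContDiff ℝ 1 g) (G : E → E)
    (hG : ∀ z, HasGradientAt g (G z) z) (a v : E) :
    Continuous fun t : ℝ => ⟪G (a + t • v), v⟫ := by
  have hfd : ∀ z, fderiv ℝ g z = InnerProductSpace.toDual ℝ E (G z) :=
    fun z => ((hG z).hasFDerivAt).fderiv
  have h1 : Continuous fun z => fderiv ℝ g z := hg.continuous_fderiv one_ne_zero
  have hγc : Continuous fun t : ℝ => a + t • v := by continuity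
  have h2 : Continuous fun t : ℝ => (fderiv ℝ g (a + t • v)) v :=
    ((ContinuousLinearMap.apply ℝ ℝ v).continuous).comp (h1.comp hγc)
  convert h2 using 1
  funext t
  rw [hfd (a + t • v)]
  simp [InnerProductSpace.toDual_apply_apply]

lemma ftc_inner {E : Type*} [NormedAddCommGroup E] [InnerProductSpace ℝ E]
    [CompleteSpace E] (g : E → ℝ) (hg : ContDiff ℝ 1 g) (G : E → E)
    (hG : ∀ z, HasGradientAt g (G z) z) (a b : E) :
    g b - g a = ∫ t in (0:ℝ)..1, ⟪G (a + t • (b - a)), b - a⟫ := by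
  set γ : ℝ → E := fun t => a + t • (b - a) with hγdef
  have hγ : ∀ t : ℝ, HasDerivAt γ (b - a) t := by
    intro t
    simpa [hγdef] using ((hasDerivAt_id t).smul_const (b - a)).const_add a
  have hψ : ∀ t : ℝ, HasDerivAt (fun s => g (γ s)) ⟪G (γ t), b - a⟫ t := by
    intro t
    have h := ((hG (γ t)).hasFDerivAt).comp_hasDerivAt t (hγ t)
    simpa [InnerProductSpace.toDual_apply_apply, Function.comp_def] using h
  have hcont : Continuous fun t => ⟪G (γ t), b - a⟫ :=
    cont_inner_grad g hg G hG a (b - a)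
  have := intervalIntegral.integral_eq_sub_of_hasDerivAt
    (f := fun s => g (γ s)) (f' := fun t => ⟪G (γ t), b - a⟫)
    (fun t _ => hψ t) (hcont.intervalIntegrable 0 1)
  rw [this]
  simp [hγdef]

set_option maxHeartbeats 2000000 in
/-- The gradient of `fⁿ(x¹,…,xⁿ) = n F(empirical measure)` in its `i`-th variable is
the intrinsic derivative `D_m F` of `F` evaluated at the empirical measure and `xⁱ`. -/
theorem gradient_fn_eq_intrinsic_derivative {d : ℕ}
    (F : Measure (EuclideanSpace ℝ (Fin d)) → ℝ)
    (δF : Measure (EuclideanSpace ℝ (Fin d)) → EuclideanSpace ℝ (Fin d) → ℝ)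
    (hC1 : ∀ m, ContDiff ℝ 1 (δF m))
    (hnorm : ∀ m : Measure (EuclideanSpace ℝ (Fin d)), IsProbabilityMeasure m →
      ∫ x, δF m x ∂m = 0)
    (hderiv : ∀ m m' : Measure (EuclideanSpace ℝ (Fin d)),
      IsProbabilityMeasure m → IsProbabilityMeasure m' →
      F m' - F m = ∫ l in Set.Icc (0:ℝ) 1,
        ((∫ x, δF (ENNReal.ofReal l • m' + ENNReal.ofReal (1 - l) • m) x ∂m')
          - ∫ x, δF (ENNReal.ofReal l • m' + ENNReal.ofReal (1 - l) • m) x ∂m))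
    (DmF : Measure (EuclideanSpace ℝ (Fin d)) → EuclideanSpace ℝ (Fin d) →
      EuclideanSpace ℝ (Fin d))
    (hDm : ∀ m x, HasGradientAt (δF m) (DmF m x) x)
    (L : ℝ)
    (hLip : ∀ m m' : Measure (EuclideanSpace ℝ (Fin d)),
      IsProbabilityMeasure m → IsProbabilityMeasure m' →
      ∀ x x', ‖DmF m x - DmF m' x'‖ ≤ L * (Real.sqrt (W2sq m m') + ‖x - x'‖))
    {n : ℕ} (hn : 0 < n)
    (fn : (Fin n → EuclideanSpace ℝ (Fin d)) → ℝ)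
    (hfn : ∀ x, fn x = n * F (empMeas x)) :
    ∀ (x : Fin n → EuclideanSpace ℝ (Fin d)) (i : Fin n),
      HasGradientAt (fun y => fn (Function.update x i y))
        (DmF (empMeas x) (x i)) (x i) := by
  intro x i
  classical
  have hn' : (n : ℝ) ≠ 0 := Nat.cast_ne_zero.2 hn.ne'
  set c : ℝ≥0∞ := (n : ℝ≥0∞)⁻¹ with hc
  have hcne : c ≠ ⊤ := by
    simp [hc, ENNReal.inv_ne_top, hn.ne']
  have hctr : c.toReal = (n:ℝ)⁻¹ := by
    simp [hc]
  have hδSM : ∀ m0, StronglyMeasurable (δF m0) :=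
    fun m0 => ((hC1 m0).continuous).stronglyMeasurable
  have hcostSM : StronglyMeasurable
      (fun p : EuclideanSpace ℝ (Fin d) × EuclideanSpace ℝ (Fin d) => ‖p.1 - p.2‖ ^ 2) := by
    apply Continuous.stronglyMeasurable
    continuity
  have hemp : ∀ z : Fin n → EuclideanSpace ℝ (Fin d), IsProbabilityMeasure (empMeas z) := by
    intro z
    constructor
    simp only [empMeas, Measure.smul_apply, Measure.coe_finset_sum, Finset.sum_apply,
      Measure.dirac_apply_of_mem (Set.mem_univ _), Finset.sum_const, Finset.card_univ,
      Fintype.card_fin, nsmul_eq_mul, mul_one, smul_eq_mul]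
    exact ENNReal.inv_mul_cancel (by exact_mod_cast hn.ne') (ENNReal.natCast_ne_top n)
  set m : Measure (EuclideanSpace ℝ (Fin d)) := empMeas x with hm
  have hm_prob : IsProbabilityMeasure m := hemp x
  set D := DmF m (x i) with hD
  set L' := max L 0 with hL'
  have hL'0 : 0 ≤ L' := le_max_right _ _
  have hLL' : L ≤ L' := le_max_left _ _
  have hint_emp : ∀ (m0 : Measure (EuclideanSpace ℝ (Fin d)))
      (z : Fin n → EuclideanSpace ℝ (Fin d)),
      ∫ p, δF m0 p ∂(empMeas z) = (n:ℝ)⁻¹ * ∑ j, δF m0 (z j) := by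
    intro m0 z
    have : empMeas z = ∑ j : Fin n, c • Measure.dirac (z j) := by
      rw [empMeas, Finset.smul_sum]
    rw [this, integral_wdirac _ _ _ (fun _ _ => hcne) (hδSM m0)]
    rw [← Finset.mul_sum]
    rw [hctr]
  have key : ∀ y : EuclideanSpace ℝ (Fin d),
      |fn (Function.update x i y) - fn x - ⟪D, y - x i⟫|
        ≤ (2 * L') * ‖y - x i‖ ^ 2 := by
    intro y
    haveI hm_probI : IsProbabilityMeasure m := hm_prob
    set v := y - x i with hv
    set xs' := Function.update x i y with hxs'
    set m' : Measure (EuclideanSpace ℝ (Fin d)) := empMeas xs' with hm'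
    haveI hm'_prob : IsProbabilityMeasure m' := hemp xs'
    set ml : ℝ → Measure (EuclideanSpace ℝ (Fin d)) :=
      fun l => ENNReal.ofReal l • m' + ENNReal.ofReal (1 - l) • m with hml
    have hw1 : ∀ l ∈ Set.Icc (0:ℝ) 1,
        ENNReal.ofReal l + ENNReal.ofReal (1 - l) = 1 := by
      intro l hl
      rw [← ENNReal.ofReal_add hl.1 (by linarith [hl.2])]
      norm_num
    have hml_prob : ∀ l ∈ Set.Icc (0:ℝ) 1, IsProbabilityMeasure (ml l) := by
      intro l hl
      constructor
      show (ENNReal.ofReal l • m' + ENNReal.ofReal (1 - l) • m) Set.univ = 1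
      rw [Measure.add_apply, Measure.smul_apply, Measure.smul_apply, measure_univ,
        measure_univ, smul_eq_mul, smul_eq_mul, mul_one, mul_one, hw1 l hl]
    set S : Measure (EuclideanSpace ℝ (Fin d)) :=
      ∑ j ∈ Finset.univ.erase i, c • Measure.dirac (x j) with hSdef
    set Sd : Measure (EuclideanSpace ℝ (Fin d) × EuclideanSpace ℝ (Fin d)) :=
      ∑ j ∈ Finset.univ.erase i, c • Measure.dirac ((x j, x j)) with hSddef
    have hm_can : m = S + c • Measure.dirac (x i) := by
      rw [hm, empMeas, Finset.smul_sum, ← Finset.sum_erase_add _ _ (Finset.mem_univ i)]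
    have hm'_can : m' = S + c • Measure.dirac y := by
      rw [hm', empMeas, Finset.smul_sum, ← Finset.sum_erase_add _ _ (Finset.mem_univ i)]
      congr 1
      · refine Finset.sum_congr rfl fun j hj => ?_
        rw [hxs', Function.update_of_ne (Finset.ne_of_mem_erase hj)]
      · rw [hxs', Function.update_self]
    have hml_can : ∀ l ∈ Set.Icc (0:ℝ) 1,
        ml l = S + (ENNReal.ofReal l * c) • Measure.dirac y
          + (ENNReal.ofReal (1 - l) * c) • Measure.dirac (x i) := by
      intro l hl
      have hS2 : ENNReal.ofReal l • S + ENNReal.ofReal (1 - l) • S = S := by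
        rw [← add_smul, hw1 l hl, one_smul]
      calc ml l = ENNReal.ofReal l • m' + ENNReal.ofReal (1 - l) • m := rfl
        _ = (ENNReal.ofReal l • S + (ENNReal.ofReal l * c) • Measure.dirac y)
            + (ENNReal.ofReal (1 - l) • S
              + (ENNReal.ofReal (1 - l) * c) • Measure.dirac (x i)) := by
            rw [hm_can, hm'_can, smul_add, smul_add, smul_smul, smul_smul]
        _ = (ENNReal.ofReal l • S + ENNReal.ofReal (1 - l) • S)
            + ((ENNReal.ofReal l * c) • Measure.dirac y
              + (ENNReal.ofReal (1 - l) * c) • Measure.dirac (x i)) := by abel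
        _ = _ := by rw [hS2, ← add_assoc]
    have hSdfst : Sd.map Prod.fst = S := by
      rw [hSddef, map_wdirac measurable_fst]
    have hSdsnd : Sd.map Prod.snd = S := by
      rw [hSddef, map_wdirac measurable_snd]
    have hIdirac : ∀ (w : ℝ≥0∞)
        (p : EuclideanSpace ℝ (Fin d) × EuclideanSpace ℝ (Fin d)), w ≠ ⊤ →
        Integrable (fun p => ‖p.1 - p.2‖^2) (w • Measure.dirac p) :=
      fun w p hw => (integrable_dirac0 hcostSM p).smul_measure hw
    have hI1 : Integrable (fun p => ‖p.1 - p.2‖^2) Sd := by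
      rw [hSddef]
      exact integrable_wdirac _ _ _ (fun _ _ => hcne) hcostSM
    have hwne : ∀ r : ℝ, ENNReal.ofReal r * c ≠ ⊤ :=
      fun r => ENNReal.mul_ne_top ENNReal.ofReal_ne_top hcne
    have hninv1 : (n:ℝ)⁻¹ ≤ 1 := by
      have h1 : (1:ℝ) ≤ n := by exact_mod_cast hn
      rw [inv_le_one_iff₀]
      right; exact h1
    have hW2base : ∀ l ∈ Set.Icc (0:ℝ) 1, W2sq (ml l) m ≤ ‖v‖ ^ 2 := by
      intro l hl
      set π : Measure (EuclideanSpace ℝ (Fin d) × EuclideanSpace ℝ (Fin d)) :=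
        Sd + (ENNReal.ofReal l * c) • Measure.dirac ((y, x i))
          + (ENNReal.ofReal (1 - l) * c) • Measure.dirac ((x i, x i)) with hπdef
      have hfst : π.map Prod.fst = ml l := by
        rw [hπdef, Measure.map_add _ _ measurable_fst, Measure.map_add _ _ measurable_fst,
          Measure.map_smul, Measure.map_smul, Measure.map_dirac' measurable_fst,
          Measure.map_dirac' measurable_fst, hSdfst, hml_can l hl]
      have hsnd : π.map Prod.snd = m := by
        rw [hπdef, Measure.map_add _ _ measurable_snd, Measure.map_add _ _ measurable_snd,
          Measure.map_smul, Measure.map_smul, Measure.map_dirac' measurable_snd,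
          Measure.map_dirac' measurable_snd, hSdsnd, hm_can]
        show S + (ENNReal.ofReal l * c) • Measure.dirac (x i)
            + (ENNReal.ofReal (1 - l) * c) • Measure.dirac (x i)
          = S + c • Measure.dirac (x i)
        rw [add_assoc, ← add_smul, ← add_mul, hw1 l hl, one_mul]
      haveI hπprob : IsProbabilityMeasure π := by
        constructor
        have h := congrArg (fun μ : Measure (EuclideanSpace ℝ (Fin d)) => μ Set.univ) hfst
        simp only [Measure.map_apply measurable_fst MeasurableSet.univ,
          Set.preimage_univ] at h
        rw [h, (hml_prob l hl).measure_univ]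
      have hcost : ∫ p, ‖p.1 - p.2‖^2 ∂π = (ENNReal.ofReal l * c).toReal * ‖v‖^2 := by
        rw [hπdef, integral_add_measure (hI1.add_measure (hIdirac _ _ (hwne l)))
            (hIdirac _ _ (hwne (1-l))),
          integral_add_measure hI1 (hIdirac _ _ (hwne l)),
          hSddef, integral_wdirac _ _ _ (fun _ _ => hcne) hcostSM,
          integral_smul_measure, integral_smul_measure,
          integral_dirac' _ _ hcostSM, integral_dirac' _ _ hcostSM]
        simp [← hv]
      calc W2sq (ml l) m ≤ ∫ p, ‖p.1 - p.2‖^2 ∂π := W2sq_le_of_coupling π hπprob hfst hsnd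
        _ = (ENNReal.ofReal l * c).toReal * ‖v‖^2 := hcost
        _ ≤ 1 * ‖v‖^2 := by
            refine mul_le_mul_of_nonneg_right ?_ (by positivity)
            rw [ENNReal.toReal_mul, ENNReal.toReal_ofReal hl.1, hctr]
            nlinarith [hl.1, hl.2, hninv1, inv_nonneg.2 (Nat.cast_nonneg (α := ℝ) n)]
        _ = ‖v‖^2 := one_mul _
    have hW2pair : ∀ l l' : ℝ, l ∈ Set.Icc (0:ℝ) 1 → l' ∈ Set.Icc (0:ℝ) 1 → l ≤ l' →
        W2sq (ml l) (ml l') ≤ |l - l'| * ‖v‖^2 := by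
      intro l l' hl hl' hle
      have habs : |l - l'| = l' - l := by
        rw [abs_sub_comm, abs_of_nonneg (by linarith)]
      set π : Measure (EuclideanSpace ℝ (Fin d) × EuclideanSpace ℝ (Fin d)) :=
        Sd + (ENNReal.ofReal l * c) • Measure.dirac ((y, y))
          + ((ENNReal.ofReal (1 - l') * c) • Measure.dirac ((x i, x i))
            + (ENNReal.ofReal (l' - l) * c) • Measure.dirac ((x i, y))) with hπdef
      have hfst : π.map Prod.fst = ml l := by
        rw [hπdef, Measure.map_add _ _ measurable_fst, Measure.map_add _ _ measurable_fst,
          Measure.map_add _ _ measurable_fst, Measure.map_smul, Measure.map_smul,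
          Measure.map_smul, Measure.map_dirac' measurable_fst, Measure.map_dirac' measurable_fst,
          Measure.map_dirac' measurable_fst, hSdfst, hml_can l hl]
        show S + (ENNReal.ofReal l * c) • Measure.dirac y
            + ((ENNReal.ofReal (1 - l') * c) • Measure.dirac (x i)
              + (ENNReal.ofReal (l' - l) * c) • Measure.dirac (x i))
          = S + (ENNReal.ofReal l * c) • Measure.dirac y
            + (ENNReal.ofReal (1 - l) * c) • Measure.dirac (x i)
        rw [← add_smul, ← add_mul, ← ENNReal.ofReal_add (by linarith [hl'.2]) (by linarith)]
        norm_num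
      have hsnd : π.map Prod.snd = ml l' := by
        rw [hπdef, Measure.map_add _ _ measurable_snd, Measure.map_add _ _ measurable_snd,
          Measure.map_add _ _ measurable_snd, Measure.map_smul, Measure.map_smul,
          Measure.map_smul, Measure.map_dirac' measurable_snd, Measure.map_dirac' measurable_snd,
          Measure.map_dirac' measurable_snd, hSdsnd, hml_can l' hl']
        show S + (ENNReal.ofReal l * c) • Measure.dirac y
            + ((ENNReal.ofReal (1 - l') * c) • Measure.dirac (x i)
              + (ENNReal.ofReal (l' - l) * c) • Measure.dirac y)
          = S + (ENNReal.ofReal l' * c) • Measure.dirac y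
            + (ENNReal.ofReal (1 - l') * c) • Measure.dirac (x i)
        have h2 : (ENNReal.ofReal l * c) • Measure.dirac y
            + ((ENNReal.ofReal (1 - l') * c) • Measure.dirac (x i)
              + (ENNReal.ofReal (l' - l) * c) • Measure.dirac y)
            = (ENNReal.ofReal l' * c) • Measure.dirac y
              + (ENNReal.ofReal (1 - l') * c) • Measure.dirac (x i) := by
          rw [add_comm ((ENNReal.ofReal (1 - l') * c) • Measure.dirac (x i))
              ((ENNReal.ofReal (l' - l) * c) • Measure.dirac y), ← add_assoc,
            ← add_smul, ← add_mul, ← ENNReal.ofReal_add hl.1 (by linarith)]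
          norm_num
        rw [add_assoc, h2, ← add_assoc]
      haveI hπprob : IsProbabilityMeasure π := by
        constructor
        have h := congrArg (fun μ : Measure (EuclideanSpace ℝ (Fin d)) => μ Set.univ) hfst
        simp only [Measure.map_apply measurable_fst MeasurableSet.univ,
          Set.preimage_univ] at h
        rw [h, (hml_prob l hl).measure_univ]
      have hcost : ∫ p, ‖p.1 - p.2‖^2 ∂π
          = (ENNReal.ofReal (l' - l) * c).toReal * ‖v‖^2 := by
        rw [hπdef, integral_add_measure (hI1.add_measure (hIdirac _ _ (hwne l)))
            ((hIdirac _ _ (hwne (1-l'))).add_measure (hIdirac _ _ (hwne (l'-l)))),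
          integral_add_measure hI1 (hIdirac _ _ (hwne l)),
          integral_add_measure (hIdirac _ _ (hwne (1-l'))) (hIdirac _ _ (hwne (l'-l))),
          hSddef, integral_wdirac _ _ _ (fun _ _ => hcne) hcostSM,
          integral_smul_measure, integral_smul_measure, integral_smul_measure,
          integral_dirac' _ _ hcostSM, integral_dirac' _ _ hcostSM,
          integral_dirac' _ _ hcostSM]
        have : ‖x i - y‖ = ‖v‖ := by rw [norm_sub_rev, ← hv]
        simp [this]
      calc W2sq (ml l) (ml l')
          ≤ ∫ p, ‖p.1 - p.2‖^2 ∂π := W2sq_le_of_coupling π hπprob hfst hsnd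
        _ = (ENNReal.ofReal (l' - l) * c).toReal * ‖v‖^2 := hcost
        _ ≤ |l - l'| * ‖v‖^2 := by
            rw [ENNReal.toReal_mul, ENNReal.toReal_ofReal (by linarith), hctr, habs]
            nlinarith [mul_nonneg (sub_nonneg.2 hle) (sq_nonneg ‖v‖), hninv1]
    -- the function h
    set hfun : ℝ → ℝ := fun l => δF (ml l) y - δF (ml l) (x i) with hhfun
    have hFTC0 : ∀ m0 : Measure (EuclideanSpace ℝ (Fin d)),
        δF m0 y - δF m0 (x i) = ∫ t in (0:ℝ)..1, ⟪DmF m0 (x i + t • v), v⟫ := by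
      intro m0
      have h := ftc_inner (δF m0) (hC1 m0) (DmF m0) (hDm m0) (x i) y
      rw [h]
    have hconti : ∀ m0 : Measure (EuclideanSpace ℝ (Fin d)),
        Continuous (fun t : ℝ => ⟪DmF m0 (x i + t • v), v⟫) :=
      fun m0 => cont_inner_grad (δF m0) (hC1 m0) (DmF m0) (hDm m0) (x i) v
    have hsq : Real.sqrt (‖v‖^2) = ‖v‖ := Real.sqrt_sq (norm_nonneg v)
    have hW2sqrt : ∀ l ∈ Set.Icc (0:ℝ) 1, Real.sqrt (W2sq (ml l) m) ≤ ‖v‖ := by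
      intro l hl
      calc Real.sqrt (W2sq (ml l) m) ≤ Real.sqrt (‖v‖^2) := Real.sqrt_le_sqrt (hW2base l hl)
        _ = ‖v‖ := hsq
    have hpt : ∀ l ∈ Set.Icc (0:ℝ) 1, |hfun l - ⟪D, v⟫| ≤ (2 * L') * ‖v‖^2 := by
      intro l hl
      have e1 : hfun l - ⟪D, v⟫
          = ∫ t in (0:ℝ)..1, (⟪DmF (ml l) (x i + t • v), v⟫ - ⟪D, v⟫) := by
        rw [intervalIntegral.integral_sub ((hconti (ml l)).intervalIntegrable 0 1)
          intervalIntegrable_const, intervalIntegral.integral_const]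
        rw [hhfun]
        show δF (ml l) y - δF (ml l) (x i) - ⟪D, v⟫ = _
        rw [hFTC0 (ml l)]
        norm_num
      rw [e1, ← Real.norm_eq_abs]
      have hb : ∀ t ∈ Set.uIoc (0:ℝ) 1,
          ‖⟪DmF (ml l) (x i + t • v), v⟫ - ⟪D, v⟫‖ ≤ (2 * L') * ‖v‖^2 := by
        intro t ht
        rw [Set.uIoc_of_le (by norm_num : (0:ℝ) ≤ 1)] at ht
        rw [← inner_sub_left, Real.norm_eq_abs]
        calc |⟪DmF (ml l) (x i + t • v) - D, v⟫|
            ≤ ‖DmF (ml l) (x i + t • v) - D‖ * ‖v‖ := abs_real_inner_le_norm _ _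
          _ ≤ (L * (Real.sqrt (W2sq (ml l) m) + ‖(x i + t • v) - x i‖)) * ‖v‖ := by
              refine mul_le_mul_of_nonneg_right ?_ (norm_nonneg v)
              exact hLip (ml l) m (hml_prob l hl) hm_prob _ _
          _ ≤ (L' * (‖v‖ + ‖v‖)) * ‖v‖ := by
              refine mul_le_mul_of_nonneg_right ?_ (norm_nonneg v)
              have h1 : ‖(x i + t • v) - x i‖ ≤ ‖v‖ := by
                rw [add_sub_cancel_left, norm_smul, Real.norm_eq_abs]
                have ht1 : |t| ≤ 1 := abs_le.2 ⟨by linarith [ht.1], ht.2⟩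
                nlinarith [norm_nonneg v, abs_nonneg t]
              have h2 := hW2sqrt l hl
              have h4 : 0 ≤ Real.sqrt (W2sq (ml l) m) + ‖(x i + t • v) - x i‖ := by
                positivity
              nlinarith [Real.sqrt_nonneg (W2sq (ml l) m), norm_nonneg ((x i + t • v) - x i),
                norm_nonneg v]
          _ = (2 * L') * ‖v‖^2 := by ring
      calc ‖∫ t in (0:ℝ)..1, (⟪DmF (ml l) (x i + t • v), v⟫ - ⟪D, v⟫)‖
          ≤ (2 * L') * ‖v‖^2 * |1 - 0| :=
            intervalIntegral.norm_integral_le_of_norm_le_const hb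
        _ = (2 * L') * ‖v‖^2 := by norm_num
    have hHolder : ∀ l ∈ Set.Icc (0:ℝ) 1, ∀ l' ∈ Set.Icc (0:ℝ) 1,
        |hfun l - hfun l'| ≤ (L' * ‖v‖^2) * Real.sqrt |l - l'| := by
      have main : ∀ l l' : ℝ, l ∈ Set.Icc (0:ℝ) 1 → l' ∈ Set.Icc (0:ℝ) 1 → l ≤ l' →
          |hfun l - hfun l'| ≤ (L' * ‖v‖^2) * Real.sqrt |l - l'| := by
        intro l l' hl hl' hle
        have e : hfun l - hfun l'
            = ∫ t in (0:ℝ)..1,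
                (⟪DmF (ml l) (x i + t • v), v⟫ - ⟪DmF (ml l') (x i + t • v), v⟫) := by
          rw [intervalIntegral.integral_sub ((hconti (ml l)).intervalIntegrable 0 1)
            ((hconti (ml l')).intervalIntegrable 0 1)]
          rw [hhfun]
          show δF (ml l) y - δF (ml l) (x i) - (δF (ml l') y - δF (ml l') (x i)) = _
          rw [hFTC0 (ml l), hFTC0 (ml l')]
        have hsd : Real.sqrt (W2sq (ml l) (ml l')) ≤ Real.sqrt |l - l'| * ‖v‖ := by
          calc Real.sqrt (W2sq (ml l) (ml l'))
              ≤ Real.sqrt (|l - l'| * ‖v‖^2) := Real.sqrt_le_sqrt (hW2pair l l' hl hl' hle)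
            _ = Real.sqrt |l - l'| * ‖v‖ := by
                rw [Real.sqrt_mul (abs_nonneg _), hsq]
        have hb : ∀ t ∈ Set.uIoc (0:ℝ) 1,
            ‖⟪DmF (ml l) (x i + t • v), v⟫ - ⟪DmF (ml l') (x i + t • v), v⟫‖
              ≤ (L' * ‖v‖^2) * Real.sqrt |l - l'| := by
          intro t ht
          rw [← inner_sub_left, Real.norm_eq_abs]
          calc |⟪DmF (ml l) (x i + t • v) - DmF (ml l') (x i + t • v), v⟫|
              ≤ ‖DmF (ml l) (x i + t • v) - DmF (ml l') (x i + t • v)‖ * ‖v‖ :=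
                abs_real_inner_le_norm _ _
            _ ≤ (L * (Real.sqrt (W2sq (ml l) (ml l')) + 0)) * ‖v‖ := by
                refine mul_le_mul_of_nonneg_right ?_ (norm_nonneg v)
                have := hLip (ml l) (ml l') (hml_prob l hl) (hml_prob l' hl')
                  (x i + t • v) (x i + t • v)
                simpa using this
            _ ≤ (L' * (Real.sqrt |l - l'| * ‖v‖)) * ‖v‖ := by
                refine mul_le_mul_of_nonneg_right ?_ (norm_nonneg v)
                rw [add_zero]
                have hs0 : 0 ≤ Real.sqrt (W2sq (ml l) (ml l')) := Real.sqrt_nonneg _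
                nlinarith [Real.sqrt_nonneg |l - l'|, norm_nonneg v]
            _ = (L' * ‖v‖^2) * Real.sqrt |l - l'| := by ring
        calc |hfun l - hfun l'|
            = ‖∫ t in (0:ℝ)..1,
                (⟪DmF (ml l) (x i + t • v), v⟫ - ⟪DmF (ml l') (x i + t • v), v⟫)‖ := by
              rw [e, Real.norm_eq_abs]
          _ ≤ (L' * ‖v‖^2) * Real.sqrt |l - l'| * |1 - 0| :=
              intervalIntegral.norm_integral_le_of_norm_le_const hb
          _ = (L' * ‖v‖^2) * Real.sqrt |l - l'| := by norm_num
      intro l hl l' hl'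
      rcases le_total l l' with hle | hle
      · exact main l l' hl hl' hle
      · rw [abs_sub_comm (hfun l), abs_sub_comm l l']
        exact main l' l hl' hl hle
    have hcontOn : ContinuousOn hfun (Set.Icc (0:ℝ) 1) := by
      rw [Metric.continuousOn_iff]
      intro b hb ε hε
      set K : ℝ := L' * ‖v‖^2 + 1 with hK
      have hK0 : 0 < K := by positivity
      refine ⟨(ε / K)^2, by positivity, fun a ha hab => ?_⟩
      have h1 := hHolder a ha b hb
      have h2 : Real.sqrt |a - b| < ε / K := by
        have hd : |a - b| < (ε / K)^2 := by rwa [Real.dist_eq] at hab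
        calc Real.sqrt |a - b| < Real.sqrt ((ε / K)^2) :=
              Real.sqrt_lt_sqrt (abs_nonneg _) hd
          _ = ε / K := Real.sqrt_sq (by positivity)
      rw [Real.dist_eq]
      have h3 : (L' * ‖v‖^2) * Real.sqrt |a - b| < K * (ε / K) := by
        have hle : L' * ‖v‖^2 ≤ K := by simp [hK]
        nlinarith [Real.sqrt_nonneg |a - b|]
      rw [mul_div_cancel₀ _ (ne_of_gt hK0)] at h3
      linarith
    have hid : fn xs' - fn x = ∫ l in Set.Icc (0:ℝ) 1, hfun l := by
      have hd := hderiv m m' hm_prob hm'_prob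
      have hdiff : ∀ l : ℝ,
          (n:ℝ) * ((∫ p, δF (ml l) p ∂m') - ∫ p, δF (ml l) p ∂m)
            = hfun l := by
        intro l
        rw [hm', hm, hint_emp, hint_emp, mul_sub, ← mul_assoc, ← mul_assoc,
          mul_inv_cancel₀ hn', one_mul, one_mul, ← Finset.sum_sub_distrib]
        rw [Finset.sum_eq_single i ?h0 ?h1]
        · rw [hxs', Function.update_self]
        · intro j _ hji
          rw [hxs', Function.update_of_ne hji, sub_self]
        · intro hi
          exact absurd (Finset.mem_univ i) hi
      calc fn xs' - fn x = (n:ℝ) * F m' - (n:ℝ) * F m := by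
            rw [hfn, hfn, ← hm, ← hm']
        _ = (n:ℝ) * (F m' - F m) := by ring
        _ = (n:ℝ) * ∫ l in Set.Icc (0:ℝ) 1,
              ((∫ p, δF (ml l) p ∂m') - ∫ p, δF (ml l) p ∂m) := by rw [hd]
        _ = ∫ l in Set.Icc (0:ℝ) 1,
              (n:ℝ) * ((∫ p, δF (ml l) p ∂m') - ∫ p, δF (ml l) p ∂m) :=
            (integral_const_mul _ _).symm
        _ = ∫ l in Set.Icc (0:ℝ) 1, hfun l := by
            congr 1
            funext l
            exact hdiff l
    have hIccvol : volume (Set.Icc (0:ℝ) 1) = 1 := by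
      rw [Real.volume_Icc]
      norm_num
    have hInt : IntegrableOn hfun (Set.Icc (0:ℝ) 1) := hcontOn.integrableOn_Icc
    have hIntc : IntegrableOn (fun _ : ℝ => ⟪D, v⟫) (Set.Icc (0:ℝ) 1) := by
      exact integrableOn_const (by rw [hIccvol]; exact ENNReal.one_ne_top)
    have e3 : ∫ l in Set.Icc (0:ℝ) 1, (hfun l - ⟪D, v⟫)
        = (∫ l in Set.Icc (0:ℝ) 1, hfun l) - ⟪D, v⟫ := by
      rw [integral_sub hInt hIntc, setIntegral_const, measureReal_def, hIccvol]
      norm_num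
    have e4 : fn xs' - fn x - ⟪D, v⟫ = ∫ l in Set.Icc (0:ℝ) 1, (hfun l - ⟪D, v⟫) := by
      rw [e3, hid]
    rw [← hxs', ← hv] at *
    rw [e4, ← Real.norm_eq_abs]
    calc ‖∫ l in Set.Icc (0:ℝ) 1, (hfun l - ⟪D, v⟫)‖
        ≤ (2 * L') * ‖v‖^2 * (volume (Set.Icc (0:ℝ) 1)).toReal := by
          refine norm_setIntegral_le_of_norm_le_const ?_ ?_
          · rw [hIccvol]; exact ENNReal.one_lt_top
          · intro l hl
            rw [Real.norm_eq_abs]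
            exact hpt l hl
      _ = (2 * L') * ‖v‖^2 := by rw [hIccvol]; norm_num
  -- conclude
  have hbigO : (fun y => fn (Function.update x i y) - fn x - ⟪D, y - x i⟫)
      =O[nhds (x i)] fun y => ‖y - x i‖ ^ 2 := by
    refine Asymptotics.IsBigO.of_bound (2 * L') (Filter.Eventually.of_forall fun y => ?_)
    have := key y
    rw [Real.norm_eq_abs]
    calc |fn (Function.update x i y) - fn x - ⟪D, y - x i⟫|
        ≤ (2 * L') * ‖y - x i‖ ^ 2 := this
      _ = (2 * L') * ‖‖y - x i‖ ^ 2‖ := by rw [Real.norm_eq_abs, abs_of_nonneg (by positivity)]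
  have hlittleo := hbigO.trans_isLittleO (Asymptotics.isLittleO_pow_sub_sub (x i) one_lt_two)
  have hfder : HasFDerivAt (fun y => fn (Function.update x i y))
      (InnerProductSpace.toDual ℝ (EuclideanSpace ℝ (Fin d)) D) (x i) := by
    rw [hasFDerivAt_iff_isLittleO]
    have hx : Function.update x i (x i) = x := Function.update_eq_self i x
    simpa [hx, InnerProductSpace.toDual_apply_apply] using hlittleo
  exact hasGradientAt_iff_hasFDerivAt.2 hfder
end

section
/- Let v : [0,∞) × ℝ^d → ℝ be a function representable as the value function of the stochastic control problem v(t,x) = inf_α E[ ∫₀ᵗ ( −G(t−s, X_s^{x,α}) + |α_s|²/2 ) ds + v₀(X_t^{x,α}) ], where dX_s^{x,α} = b(t−s, X_s^{x,α}) ds − σ α_s ds + σ dW_s. If v₀ has finite oscillation osc v₀ and ∫₀^∞ osc_x G(t,·) dt < ∞, then the spatial oscillation of v is uniformly bounded in time: sup_t sup_{x,y} |v(t,x) − v(t,y)| ≤ ∫₀^∞ osc_x G(t,·) dt + osc v₀. -/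
open MeasureTheory

private lemma abs_ciInf_sub_ciInf_le {A : Type*} [Nonempty A] {f g : A → ℝ} {C : ℝ}
    (hf : BddBelow (Set.range f)) (hg : BddBelow (Set.range g))
    (h : ∀ α, |f α - g α| ≤ C) : |(⨅ α, f α) - ⨅ α, g α| ≤ C := by
  rw [abs_sub_le_iff]
  constructor
  · rw [sub_le_iff_le_add, ← sub_le_iff_le_add']
    refine le_ciInf fun α => ?_
    have h1 := ciInf_le hf α
    have h2 := (abs_le.1 (h α)).2
    linarith
  · rw [sub_le_iff_le_add, ← sub_le_iff_le_add']
    refine le_ciInf fun α => ?_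
    have h1 := ciInf_le hg α
    have h2 := (abs_le.1 (h α)).1
    linarith


/-- The spatial oscillation of a value function of a stochastic control problem is
bounded, uniformly in time, by the time-integrated oscillation of the running reward
plus the oscillation of the terminal cost. -/
theorem value_function_oscillation_bound {d : ℕ} {Ω A : Type*}
    [MeasurableSpace Ω] (P : Measure Ω) [IsProbabilityMeasure P] [Nonempty A]
    (G : ℝ → EuclideanSpace ℝ (Fin d) → ℝ) (oscG : ℝ → ℝ)
    (v0 : EuclideanSpace ℝ (Fin d) → ℝ) (oscv0 : ℝ)
    (hoscG : ∀ t a b, |G t a - G t b| ≤ oscG t)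
    (hoscGpos : ∀ t, 0 ≤ oscG t)
    (hoscGint : IntegrableOn oscG (Set.Ioi 0) volume)
    (hv0 : ∀ a b, |v0 a - v0 b| ≤ oscv0)
    -- controlled processes: for each control `α` and initial point `x`
    (X : A → EuclideanSpace ℝ (Fin d) → ℝ → Ω → EuclideanSpace ℝ (Fin d))
    -- running control cost `|α_s|²/2`, independent of the initial point
    (c : A → ℝ → Ω → ℝ)
    (v : ℝ → EuclideanSpace ℝ (Fin d) → ℝ)
    (hv : ∀ t x, v t x = ⨅ α : A,
      ∫ ω, ((∫ s in (0:ℝ)..t, (-(G (t - s) (X α x s ω)) + c α s ω))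
        + v0 (X α x t ω)) ∂P)
    (hint : ∀ α x t, Integrable
      (fun ω => (∫ s in (0:ℝ)..t, (-(G (t - s) (X α x s ω)) + c α s ω))
        + v0 (X α x t ω)) P)
    (hintin : ∀ α x t ω,
      IntervalIntegrable (fun s => -(G (t - s) (X α x s ω)) + c α s ω) volume 0 t)
    (hbdd : ∀ t x, BddBelow (Set.range fun α : A =>
      ∫ ω, ((∫ s in (0:ℝ)..t, (-(G (t - s) (X α x s ω)) + c α s ω))
        + v0 (X α x t ω)) ∂P)) :
    ∀ t : ℝ, 0 ≤ t → ∀ x y,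
      |v t x - v t y| ≤ (∫ s in Set.Ioi (0:ℝ), oscG s) + oscv0 := by
  intro t ht x y
  have hoscInt : IntervalIntegrable oscG volume 0 t := by
    rw [intervalIntegrable_iff_integrableOn_Ioc_of_le ht]
    exact hoscGint.mono_set Set.Ioc_subset_Ioi_self
  have hoscInt' : IntervalIntegrable (fun s => oscG (t - s)) volume 0 t := by
    have := (hoscInt.comp_sub_left t).symm
    simpa using this
  have hoscval : (∫ s in (0:ℝ)..t, oscG (t - s)) ≤ ∫ s in Set.Ioi (0:ℝ), oscG s := by
    rw [intervalIntegral.integral_comp_sub_left oscG t]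
    simp only [sub_self, sub_zero]
    rw [intervalIntegral.integral_of_le ht]
    exact setIntegral_mono_set hoscGint (Filter.Eventually.of_forall hoscGpos)
      (HasSubset.Subset.eventuallyLE Set.Ioc_subset_Ioi_self)
  rw [hv t x, hv t y]
  refine abs_ciInf_sub_ciInf_le (hbdd t x) (hbdd t y) fun α => ?_
  rw [← integral_sub (hint α x t) (hint α y t)]
  have key : ∀ ω, ‖((∫ s in (0:ℝ)..t, (-(G (t - s) (X α x s ω)) + c α s ω))
      + v0 (X α x t ω)) - ((∫ s in (0:ℝ)..t, (-(G (t - s) (X α y s ω)) + c α s ω))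
      + v0 (X α y t ω))‖ ≤ (∫ s in Set.Ioi (0:ℝ), oscG s) + oscv0 := by
    intro ω
    have hdiff : (∫ s in (0:ℝ)..t, (-(G (t - s) (X α x s ω)) + c α s ω))
        - (∫ s in (0:ℝ)..t, (-(G (t - s) (X α y s ω)) + c α s ω))
        = ∫ s in (0:ℝ)..t, (G (t - s) (X α y s ω) - G (t - s) (X α x s ω)) := by
      rw [← intervalIntegral.integral_sub (hintin α x t ω) (hintin α y t ω)]
      congr 1
      funext s
      ring
    have hG : |∫ s in (0:ℝ)..t, (G (t - s) (X α y s ω) - G (t - s) (X α x s ω))|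
        ≤ ∫ s in (0:ℝ)..t, oscG (t - s) := by
      have := intervalIntegral.norm_integral_le_abs_of_norm_le
        (f := fun s => G (t - s) (X α y s ω) - G (t - s) (X α x s ω))
        (g := fun s => oscG (t - s)) (μ := volume) (a := 0) (b := t)
        (Filter.Eventually.of_forall fun s => by
          simpa [Real.norm_eq_abs] using hoscG (t - s) (X α y s ω) (X α x s ω))
        hoscInt'
      rwa [Real.norm_eq_abs,
        abs_of_nonneg (intervalIntegral.integral_nonneg ht fun s _ => hoscGpos _)] at this
    rw [Real.norm_eq_abs, show ((∫ s in (0:ℝ)..t, (-(G (t - s) (X α x s ω)) + c α s ω))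
      + v0 (X α x t ω)) - ((∫ s in (0:ℝ)..t, (-(G (t - s) (X α y s ω)) + c α s ω))
      + v0 (X α y t ω)) = ((∫ s in (0:ℝ)..t, (-(G (t - s) (X α x s ω)) + c α s ω))
      - (∫ s in (0:ℝ)..t, (-(G (t - s) (X α y s ω)) + c α s ω)))
      + (v0 (X α x t ω) - v0 (X α y t ω)) by ring, hdiff]
    calc _ ≤ |∫ s in (0:ℝ)..t, (G (t - s) (X α y s ω) - G (t - s) (X α x s ω))|
          + |v0 (X α x t ω) - v0 (X α y t ω)| := abs_add_le _ _
      _ ≤ (∫ s in Set.Ioi (0:ℝ), oscG s) + oscv0 :=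
          add_le_add (hG.trans hoscval) (hv0 _ _)
  have := norm_integral_le_of_norm_le_const (μ := P) (Filter.Eventually.of_forall key)
  simpa [Real.norm_eq_abs] using this
end
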